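/- arXiv:1901.07051 — 3 statements merged into one kernel-verified Lean document; each statement's English description precedes it below -/
import Mathlib

section
/- Let G be a finite connected undirected weighted graph on N vertices with graph Laplacian Δ, eigenvalues 0 = λ_0 < λ_1 ≤ … ≤ λ_{N−1}, orthonormal eigenvectors φ_0, …, φ_{N−1}, and Hermitian graph wavelets ψ_{t,x}. Let ρ : V×V → [0,∞) be an intrinsic metric on G with jump size s > 0, and suppose the heat kernel bound H_t(x,y) ≤ exp(−ζ_s(t, ρ(x,y))) holds for all t > 0 and all vertices x, y. Then there exists a constant c > 0 (depending only on G) such that for all t > 0 and all vertices x ≠ y, writing r = ρ(x,y), one has |ψ_{t,x}(y)| ≤ t · ( |∂ζ_s/∂t (t,r)| + c/t ) · exp(−ζ_s(t,r)). -/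
/-!
For small `t`, `ψ_{t,x}(y) = t (Δ H_t)(x,y)`, and `H_t = e^{-tΔ}` is entrywise nonnegative since `Δ`
has nonpositive off-diagonal entries. Hence `|ψ_{t,x}(y)| ≤ ∑_z |Δ_{x,z}| · t H_t(z,y)`, where only
`z = x` and the neighbours of `x` contribute, and these lie within one jump `s` of `x`. As
`∂ζ/∂r = arsinh(rs/t)/s`, moving `r` by one jump changes `ζ` by at most `arsinh(rs/t)`, and
`t e^{arsinh(rs/t)} ≤ t + 2rs` stays bounded. For large `t`, every term of the spectral sum
`tλ_k e^{-tλ_k} φ_k(x) φ_k(y)` is at most `1` in absolute value and `ζ_s(t,r) ≤ r²/t` is bounded.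
Either way `|ψ_{t,x}(y)| ≤ c e^{-ζ}`.
-/

open Finset

/-- The Hermitian graph wavelet `ψ_{t,x}(y) = ∑_{k=1}^{N-1} t λ_k e^{-t λ_k} φ_k(x) φ_k(y)`. -/
noncomputable def hermPsi {N : ℕ} (lam : Fin N → ℝ) (φ : Fin N → Fin N → ℝ)
    (t : ℝ) (x y : Fin N) : ℝ :=
  ∑ k ∈ Finset.univ.filter (fun k : Fin N => (k : ℕ) ≠ 0),
    t * lam k * Real.exp (-(t * lam k)) * φ k x * φ k y

/-- The heat kernel `H_t(x,y) = ∑_{k=0}^{N-1} e^{-t λ_k} φ_k(x) φ_k(y)`. -/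
noncomputable def heatKernel {N : ℕ} (lam : Fin N → ℝ) (φ : Fin N → Fin N → ℝ)
    (t : ℝ) (x y : Fin N) : ℝ :=
  ∑ k, Real.exp (-(t * lam k)) * φ k x * φ k y

/-- `ζ_s(t, r) = (1/s²) (r s · arcsinh(r s / t) − √(t² + r² s²) + t)`. -/
noncomputable def zeta (s r t : ℝ) : ℝ :=
  (1 / s ^ 2) * (r * s * Real.arsinh (r * s / t) - Real.sqrt (t ^ 2 + r ^ 2 * s ^ 2) + t)

open scoped Matrix

namespace Matrix

variable {n : Type*} [Fintype n] [DecidableEq n]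

theorem exp_apply_nonneg {M : Matrix n n ℝ} (hM : ∀ i j, 0 ≤ M i j) (i j : n) :
    0 ≤ NormedSpace.exp M i j := by
  let _ := Matrix.linftyOpNormedRing (n := n) (α := ℝ)
  let _ := Matrix.linftyOpNormedAlgebra (n := n) (R := ℝ) (α := ℝ)
  have hsum := Pi.hasSum.mp (Pi.hasSum.mp (NormedSpace.exp_series_hasSum_exp' (𝕂 := ℝ) M) i) j
  exact hsum.nonneg fun k => mul_nonneg (by positivity) (pow_apply_nonneg hM k i j)

theorem exp_add_algebraMap (M : Matrix n n ℝ) (c : ℝ) :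
    NormedSpace.exp (M + algebraMap ℝ _ c) = Real.exp c • NormedSpace.exp M := by
  let _ := Matrix.linftyOpNormedRing (n := n) (α := ℝ)
  let _ := Matrix.linftyOpNormedAlgebra (n := n) (R := ℝ) (α := ℝ)
  have hc : NormedSpace.exp (algebraMap ℝ (Matrix n n ℝ) c) = algebraMap ℝ _ (Real.exp c) := by
    rw [Real.exp_eq_exp_ℝ]
    exact (NormedSpace.algebraMap_exp_comm c).symm
  rw [exp_add_of_commute _ _ (Algebra.commutes c M).symm, hc, ← Algebra.commutes, Algebra.smul_def]

theorem exp_apply_nonneg_of_offDiag {M : Matrix n n ℝ} (hM : ∀ i j, i ≠ j → 0 ≤ M i j)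
    (i j : n) : 0 ≤ NormedSpace.exp M i j := by
  obtain ⟨c, hc⟩ := Finite.exists_le fun i => -M i i
  have hshift : ∀ i j, 0 ≤ (M + algebraMap ℝ _ c) i j := by
    intro i j
    rcases eq_or_ne i j with rfl | hij
    · simpa [add_comm, algebraMap_eq_diagonal] using neg_le_iff_add_nonneg.mp (hc i)
    · simpa [algebraMap_eq_diagonal, diagonal_apply_ne _ hij] using hM i j hij
  have hexp := exp_add_algebraMap (M + algebraMap ℝ _ c) (-c)
  rw [add_assoc, ← map_add, add_neg_cancel, map_zero, add_zero] at hexp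
  rw [hexp, smul_apply, smul_eq_mul]
  exact mul_nonneg (Real.exp_pos _).le (exp_apply_nonneg hshift i j)

end Matrix

namespace Real

theorem arsinh_le_self {x : ℝ} (hx : 0 ≤ x) : arsinh x ≤ x := by
  simpa using arsinh_le_arsinh.mpr (self_le_sinh_iff.mpr hx)

theorem exp_arsinh_le {x : ℝ} (hx : 0 ≤ x) : exp (arsinh x) ≤ 1 + 2 * x := by
  have hsqrt : √(1 + x ^ 2) ≤ 1 + x := Real.sqrt_le_iff.mpr ⟨by positivity, by nlinarith⟩
  rw [exp_arsinh]
  linarith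

end Real

section Zeta

variable {s t : ℝ}

theorem hasDerivAt_zeta (hs : s ≠ 0) (ht : 0 < t) (r : ℝ) :
    HasDerivAt (fun r => zeta s r t) (Real.arsinh (r * s / t) / s) r := by
  have hlin : HasDerivAt (fun r : ℝ => r * s) s r := by simpa using (hasDerivAt_id r).mul_const s
  have harsinh := (hlin.div_const t).arsinh
  have hroot : HasDerivAt (fun r : ℝ => √(t ^ 2 + r ^ 2 * s ^ 2))
      (r * s ^ 2 / √(t ^ 2 + r ^ 2 * s ^ 2)) r := by
    refine ((((hasDerivAt_pow 2 r).mul_const (s ^ 2)).const_add (t ^ 2)).sqrt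
      (by positivity)).congr_deriv ?_
    field_simp
    ring
  set q := √(1 + (r * s / t) ^ 2) with hq
  have hsqrt : √(t ^ 2 + r ^ 2 * s ^ 2) = t * q := by
    rw [hq, ← Real.sqrt_sq ht.le, ← Real.sqrt_mul (sq_nonneg _), Real.sqrt_sq ht.le]
    congr 1
    field_simp
  refine ((((hlin.mul harsinh).sub hroot).add_const t).const_mul (1 / s ^ 2)).congr_deriv ?_
  rw [hsqrt, smul_eq_mul]
  field_simp
  ring

theorem zeta_monotoneOn (hs : 0 < s) (ht : 0 < t) :
    MonotoneOn (fun r => zeta s r t) (Set.Ici 0) := by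
  refine monotoneOn_of_deriv_nonneg (convex_Ici 0) ?_ ?_ fun r hr => ?_
  · exact fun r _ => (hasDerivAt_zeta hs.ne' ht r).continuousAt.continuousWithinAt
  · exact fun r _ => (hasDerivAt_zeta hs.ne' ht r).differentiableAt.differentiableWithinAt
  · rw [interior_Ici] at hr
    rw [(hasDerivAt_zeta hs.ne' ht r).deriv]
    have : 0 ≤ Real.arsinh (r * s / t) := Real.arsinh_nonneg_iff.mpr (by have := hr.out; positivity)
    positivity

theorem zeta_sub_le (hs : 0 < s) (ht : 0 < t) {a b : ℝ} (hab : a ≤ b) :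
    zeta s b t - zeta s a t ≤ Real.arsinh (b * s / t) / s * (b - a) := by
  refine (convex_Iic b).image_sub_le_mul_sub_of_deriv_le
    (fun r _ => (hasDerivAt_zeta hs.ne' ht r).continuousAt.continuousWithinAt)
    (fun r _ => (hasDerivAt_zeta hs.ne' ht r).differentiableAt.differentiableWithinAt)
    (fun r hr => ?_) a hab b (le_refl b) hab
  rw [interior_Iic] at hr
  rw [(hasDerivAt_zeta hs.ne' ht r).deriv]
  gcongr
  exact hr.out.le

theorem zeta_sub_le_arsinh (hs : 0 < s) (ht : 0 < t) {r r' : ℝ} (hr : 0 ≤ r) (hr' : 0 ≤ r')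
    (hrr' : r - s ≤ r') : zeta s r t - zeta s r' t ≤ Real.arsinh (r * s / t) := by
  have harsinh : 0 ≤ Real.arsinh (r * s / t) := Real.arsinh_nonneg_iff.mpr (by positivity)
  rcases le_total r r' with hle | hle
  · linarith [zeta_monotoneOn hs ht hr hr' hle]
  · calc zeta s r t - zeta s r' t ≤ Real.arsinh (r * s / t) / s * (r - r') := zeta_sub_le hs ht hle
      _ ≤ Real.arsinh (r * s / t) / s * s := by gcongr; linarith
      _ = Real.arsinh (r * s / t) := div_mul_cancel₀ _ hs.ne'

theorem mul_exp_neg_zeta_le (hs : 0 < s) (ht : 0 < t) {r r' : ℝ} (hr : 0 ≤ r) (hr' : 0 ≤ r')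
    (hrr' : r - s ≤ r') :
    t * Real.exp (-zeta s r' t) ≤ (t + 2 * r * s) * Real.exp (-zeta s r t) :=
  calc t * Real.exp (-zeta s r' t)
      = t * Real.exp (zeta s r t - zeta s r' t) * Real.exp (-zeta s r t) := by
        rw [mul_assoc, ← Real.exp_add]
        ring_nf
    _ ≤ t * Real.exp (Real.arsinh (r * s / t)) * Real.exp (-zeta s r t) := by
        gcongr
        exact zeta_sub_le_arsinh hs ht hr hr' hrr'
    _ ≤ t * (1 + 2 * (r * s / t)) * Real.exp (-zeta s r t) := by
        gcongr
        exact Real.exp_arsinh_le (by positivity)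
    _ = (t + 2 * r * s) * Real.exp (-zeta s r t) := by
        field_simp

theorem zeta_le_sq_div (hs : 0 < s) (ht : 0 < t) {r : ℝ} (hr : 0 ≤ r) : zeta s r t ≤ r ^ 2 / t := by
  have hsqrt : t ≤ √(t ^ 2 + r ^ 2 * s ^ 2) := Real.le_sqrt_of_sq_le (by nlinarith)
  have harsinh : Real.arsinh (r * s / t) ≤ r * s / t := Real.arsinh_le_self (by positivity)
  calc zeta s r t ≤ 1 / s ^ 2 * (r * s * (r * s / t)) := by
        unfold zeta
        gcongr
        nlinarith [mul_nonneg hr hs.le]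
    _ = r ^ 2 / t := by field_simp

theorem one_le_exp_sq_mul_exp_neg_zeta (hs : 0 < s) (ht : 1 ≤ t) {r R : ℝ} (hr : 0 ≤ r)
    (hrR : r ≤ R) : 1 ≤ Real.exp (R ^ 2) * Real.exp (-zeta s r t) := by
  have hζ : zeta s r t ≤ R ^ 2 := calc
    zeta s r t ≤ r ^ 2 / t := zeta_le_sq_div hs (one_pos.trans_le ht) hr
    _ ≤ r ^ 2 := div_le_self (sq_nonneg _) ht
    _ ≤ R ^ 2 := by gcongr
  rw [← Real.exp_add]
  exact Real.one_le_exp (by linarith)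

end Zeta

theorem abs_sum_mul_le_sum_abs_mul {ι : Type*} (u : Finset ι) {a b : ι → ℝ} {B : ℝ}
    (hb : ∀ i ∈ u, 0 ≤ b i) (hbB : ∀ i ∈ u, a i ≠ 0 → b i ≤ B) :
    |∑ i ∈ u, a i * b i| ≤ (∑ i ∈ u, |a i|) * B := by
  rw [sum_mul]
  refine (abs_sum_le_sum_abs _ _).trans (sum_le_sum fun i hi => ?_)
  rw [abs_mul, abs_of_nonneg (hb i hi)]
  rcases eq_or_ne (a i) 0 with h | h
  · simp [h]
  · exact mul_le_mul_of_nonneg_left (hbB i hi h) (abs_nonneg _)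

section Spectral

variable {N : ℕ} {Δ : Matrix (Fin N) (Fin N) ℝ} {lam : Fin N → ℝ} {φ : Fin N → Fin N → ℝ}

theorem sum_mul_eigenvector (heig : ∀ k, Δ *ᵥ φ k = lam k • φ k) (k x : Fin N) :
    ∑ z, Δ x z * φ k z = lam k * φ k x := by
  simpa [Matrix.mulVec, dotProduct] using congrFun (heig k) x

theorem heatKernel_eq_exp_apply (heig : ∀ k, Δ *ᵥ φ k = lam k • φ k)
    (horth : ∀ j k, ∑ y, φ j y * φ k y = if j = k then 1 else 0) (t : ℝ) (x y : Fin N) :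
    heatKernel lam φ t x y = NormedSpace.exp (-(t • Δ)) x y := by
  set Q : Matrix (Fin N) (Fin N) ℝ := Matrix.of φ
  have hQQ : Q * Qᵀ = 1 := by
    ext j k
    simpa [Q, Matrix.mul_apply, Matrix.one_apply] using horth j k
  have hQinv : Qᵀ⁻¹ = Q := Matrix.inv_eq_left_inv hQQ
  have hΔ : Δ = Qᵀ * Matrix.diagonal lam * Q := by
    have hΔQ : Δ * Qᵀ = Qᵀ * Matrix.diagonal lam := by
      ext x k
      rw [Matrix.mul_diagonal, Matrix.mul_apply]
      simpa [Q, mul_comm] using sum_mul_eigenvector heig k x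
    rw [← hΔQ, Matrix.mul_assoc, mul_eq_one_comm.mp hQQ, Matrix.mul_one]
  have hdec : -(t • Δ) = Qᵀ * Matrix.diagonal (fun k => -(t * lam k)) * Qᵀ⁻¹ := by
    have hdiag : Matrix.diagonal (fun k => -(t * lam k)) = -(t • Matrix.diagonal lam) := by
      rw [← Matrix.diagonal_smul, ← Matrix.diagonal_neg]
      rfl
    rw [hQinv, hΔ, hdiag, Matrix.mul_neg, Matrix.neg_mul, Matrix.mul_smul, Matrix.smul_mul]
  rw [hdec, Matrix.exp_conj _ _ (IsUnit.of_mul_eq_one _ (mul_eq_one_comm.mp hQQ)),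
    Matrix.exp_diagonal, hQinv, Matrix.mul_apply, heatKernel]
  refine Finset.sum_congr rfl fun k _ => ?_
  rw [Matrix.mul_diagonal, Pi.coe_exp, ← Real.exp_eq_exp_ℝ]
  simp only [Q, Matrix.transpose_apply, Matrix.of_apply]
  ring

theorem heatKernel_nonneg (heig : ∀ k, Δ *ᵥ φ k = lam k • φ k)
    (horth : ∀ j k, ∑ y, φ j y * φ k y = if j = k then 1 else 0)
    (hoff : ∀ i j, i ≠ j → Δ i j ≤ 0) {t : ℝ} (ht : 0 ≤ t) (x y : Fin N) :
    0 ≤ heatKernel lam φ t x y := by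
  rw [heatKernel_eq_exp_apply heig horth]
  refine Matrix.exp_apply_nonneg_of_offDiag (fun i j hij => ?_) x y
  simpa using mul_nonneg ht (neg_nonneg.mpr (hoff i j hij))

theorem hermPsi_eq_mul_sum_mul_heatKernel (hN : 0 < N) (heig : ∀ k, Δ *ᵥ φ k = lam k • φ k)
    (hlam0 : lam ⟨0, hN⟩ = 0) (t : ℝ) (x y : Fin N) :
    hermPsi lam φ t x y = t * ∑ z, Δ x z * heatKernel lam φ t z y := by
  have hfull : hermPsi lam φ t x y = ∑ k, t * lam k * Real.exp (-(t * lam k)) * φ k x * φ k y := by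
    refine sum_subset (filter_subset _ _) fun k _ hk => ?_
    obtain rfl : k = ⟨0, hN⟩ := Fin.ext (by simpa using hk)
    simp [hlam0]
  simp only [hfull, heatKernel, mul_sum]
  rw [sum_comm]
  refine sum_congr rfl fun k _ => ?_
  calc t * lam k * Real.exp (-(t * lam k)) * φ k x * φ k y
      = t * Real.exp (-(t * lam k)) * φ k y * (lam k * φ k x) := by ring
    _ = _ := by
      rw [← sum_mul_eigenvector heig k x, mul_sum]
      exact sum_congr rfl fun z _ => by ring

theorem abs_apply_le_one_of_orthonormal
    (horth : ∀ j k, ∑ y, φ j y * φ k y = if j = k then 1 else 0) (k x : Fin N) : |φ k x| ≤ 1 :=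
  abs_le_one_iff_mul_self_le_one.mpr <| (horth k k).trans (if_pos rfl) ▸
    single_le_sum (fun y _ => mul_self_nonneg (φ k y)) (mem_univ x)

theorem abs_hermPsi_le_card (hlam : ∀ k, 0 ≤ lam k)
    (horth : ∀ j k, ∑ y, φ j y * φ k y = if j = k then 1 else 0) {t : ℝ} (ht : 0 ≤ t)
    (x y : Fin N) : |hermPsi lam φ t x y| ≤ N := by
  have hterm : ∀ k, |t * lam k * Real.exp (-(t * lam k)) * φ k x * φ k y| ≤ 1 := by
    intro k
    have hexp : t * lam k * Real.exp (-(t * lam k)) ≤ 1 :=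
      (Real.mul_exp_neg_le_exp_neg_one _).trans (Real.exp_le_one_iff.mpr (by norm_num))
    rw [abs_mul, abs_mul, abs_of_nonneg (by have := hlam k; positivity)]
    have hφx := abs_apply_le_one_of_orthonormal horth k x
    have hφy := abs_apply_le_one_of_orthonormal horth k y
    exact mul_le_one₀ (mul_le_one₀ hexp (abs_nonneg _) hφx) (abs_nonneg _) hφy
  calc |hermPsi lam φ t x y| ≤ ∑ k ∈ univ.filter (fun k : Fin N => (k : ℕ) ≠ 0), 1 :=
        (abs_sum_le_sum_abs _ _).trans (sum_le_sum fun k _ => hterm k)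
    _ ≤ ∑ _k : Fin N, (1 : ℝ) := sum_le_sum_of_subset_of_nonneg (filter_subset _ _) (by simp)
    _ = N := by simp

theorem abs_hermPsi_le_of_heatKernel_le (hN : 0 < N) (heig : ∀ k, Δ *ᵥ φ k = lam k • φ k)
    (horth : ∀ j k, ∑ y, φ j y * φ k y = if j = k then 1 else 0) (hlam0 : lam ⟨0, hN⟩ = 0)
    (hoff : ∀ i j, i ≠ j → Δ i j ≤ 0) {ρ : Fin N → Fin N → ℝ} (hρ_nonneg : ∀ x y, 0 ≤ ρ x y)
    (hρ_triangle : ∀ x y z, ρ x z ≤ ρ x y + ρ y z) {s : ℝ} (hs : 0 < s)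
    (hjump : ∀ x z, x ≠ z → Δ x z ≠ 0 → ρ x z ≤ s) {t : ℝ} (ht : 0 < t)
    (hheat : ∀ x y, heatKernel lam φ t x y ≤ Real.exp (-zeta s (ρ x y) t)) (x y : Fin N) :
    |hermPsi lam φ t x y| ≤
      (∑ z, |Δ x z|) * ((t + 2 * ρ x y * s) * Real.exp (-zeta s (ρ x y) t)) := by
  rw [hermPsi_eq_mul_sum_mul_heatKernel hN heig hlam0, mul_sum]
  simp_rw [mul_left_comm t]
  refine abs_sum_mul_le_sum_abs_mul _
    (fun z _ => mul_nonneg ht.le (heatKernel_nonneg heig horth hoff ht.le z y)) fun z _ hz => ?_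
  have hfar : ρ x y - s ≤ ρ z y := by
    rcases eq_or_ne x z with rfl | hxz
    · linarith
    · linarith [hρ_triangle x z y, hjump x z hxz hz]
  calc t * heatKernel lam φ t z y ≤ t * Real.exp (-zeta s (ρ z y) t) := by gcongr; exact hheat z y
    _ ≤ _ := mul_exp_neg_zeta_le hs ht (hρ_nonneg x y) (hρ_nonneg z y) hfar

end Spectral

theorem hermitian_graph_wavelet_localization
    (N : ℕ) (hN : 1 < N)
    (w : Fin N → Fin N → ℝ)
    (hw_nonneg : ∀ x y, 0 ≤ w x y)
    (Δ : Matrix (Fin N) (Fin N) ℝ)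
    (hΔ : ∀ x y, Δ x y = (if x = y then ∑ z, w x z else 0) - w x y)
    (lam : Fin N → ℝ) (φ : Fin N → Fin N → ℝ)
    (hmono : Monotone lam)
    (heig : ∀ k, Δ.mulVec (φ k) = lam k • φ k)
    (horth : ∀ j k, (∑ y, φ j y * φ k y) = if j = k then (1:ℝ) else 0)
    (hlam0 : lam ⟨0, by omega⟩ = 0)
    -- an intrinsic metric ρ on G with jump size s > 0
    (ρ : Fin N → Fin N → ℝ)
    (hρ_nonneg : ∀ x y, 0 ≤ ρ x y)
    (hρ_triangle : ∀ x y z, ρ x z ≤ ρ x y + ρ y z)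
    (s : ℝ) (hs : 0 < s)
    (hjump : IsGreatest {r : ℝ | ∃ x y : Fin N, 0 < w x y ∧ ρ x y = r} s)
    -- the heat kernel bound `H_t(x,y) ≤ exp(−ζ_s(t, ρ(x,y)))`
    (hheat : ∀ t : ℝ, 0 < t → ∀ x y : Fin N,
      heatKernel lam φ t x y ≤ Real.exp (-(zeta s (ρ x y) t))) :
    ∃ c : ℝ, 0 < c ∧ ∀ t : ℝ, 0 < t → ∀ x y : Fin N, x ≠ y →
      |hermPsi lam φ t x y|
        ≤ t * (|deriv (fun u : ℝ => zeta s (ρ x y) u) t| + c / t)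
            * Real.exp (-(zeta s (ρ x y) t)) := by
  have hoff : ∀ i j, i ≠ j → Δ i j ≤ 0 := fun i j hij => by simp [hΔ, hij, hw_nonneg i j]
  have hΔjump : ∀ x z, x ≠ z → Δ x z ≠ 0 → ρ x z ≤ s := fun x z hxz hΔxz =>
    hjump.2 ⟨x, z, (hw_nonneg x z).lt_of_ne' (by simpa [hΔ, hxz] using hΔxz), rfl⟩
  have hlam : ∀ k, 0 ≤ lam k := fun k => hlam0 ▸ hmono (Nat.zero_le k)
  let o : Fin N := ⟨0, by omega⟩
  obtain ⟨R, hR⟩ := Finite.exists_le fun p : Fin N × Fin N => ρ p.1 p.2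
  obtain ⟨K, hK⟩ := Finite.exists_le fun x : Fin N => ∑ z, |Δ x z|
  have hR0 : 0 ≤ R := (hρ_nonneg o o).trans (hR (o, o))
  have hK0 : 0 ≤ K := (sum_nonneg fun z _ => abs_nonneg (Δ o z)).trans (hK o)
  have hNpos : (0 : ℝ) < N := Nat.cast_pos.mpr (by omega)
  refine ⟨K * (1 + 2 * R * s) + N * Real.exp (R ^ 2), by positivity, fun t ht x y _ => ?_⟩
  have hr := hρ_nonneg x y
  have hrR : ρ x y ≤ R := hR (x, y)
  set E := Real.exp (-zeta s (ρ x y) t)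
  suffices hψ : |hermPsi lam φ t x y| ≤ K * ((1 + 2 * R * s) * E) ∨
      |hermPsi lam φ t x y| ≤ N * (Real.exp (R ^ 2) * E) by
    have hE : 0 ≤ E := (Real.exp_pos _).le
    have hd : 0 ≤ t * |deriv (fun u : ℝ => zeta s (ρ x y) u) t| * E := by positivity
    have hA : 0 ≤ K * ((1 + 2 * R * s) * E) := by positivity
    have hB : 0 ≤ N * (Real.exp (R ^ 2) * E) := by positivity
    rw [mul_add t, mul_div_cancel₀ _ ht.ne']
    rcases hψ with hψ | hψ <;> linarith
  rcases le_total t 1 with ht1 | ht1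
  · left
    calc |hermPsi lam φ t x y| ≤ (∑ z, |Δ x z|) * ((t + 2 * ρ x y * s) * E) :=
          abs_hermPsi_le_of_heatKernel_le (by omega) heig horth hlam0 hoff hρ_nonneg hρ_triangle hs
            hΔjump ht (hheat t ht) x y
      _ ≤ K * ((1 + 2 * R * s) * E) := by gcongr; exact hK x
  · right
    calc |hermPsi lam φ t x y| ≤ N := abs_hermPsi_le_card hlam horth ht.le x y
      _ ≤ N * (Real.exp (R ^ 2) * E) :=
          le_mul_of_one_le_right hNpos.le (one_le_exp_sq_mul_exp_neg_zeta hs ht1 hr hrR)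
end

section
/- Let G be a finite connected undirected weighted graph on N vertices with graph Laplacian Δ, eigenvalues 0 = λ_0 < λ_1 ≤ … ≤ λ_{N−1}, orthonormal eigenvectors φ_0, …, φ_{N−1}, Hermitian graph wavelets ψ_{t,x}, Maximum Diffusion Time MDT(x) = ∫_0^∞ ‖ψ_{t,x}‖² dt, and Information Centrality IC(x) = ( Σ_{k=1}^{N−1} |φ_k(x)|²/λ_k + (1/N) Σ_{y∈V} Σ_{k=1}^{N−1} |φ_k(y)|²/λ_k )^{−1}. Then the set of vertices minimizing MDT equals the set of vertices maximizing IC; that is, {x ∈ V : ∀ y ∈ V, MDT(x) ≤ MDT(y)} = {x ∈ V : ∀ y ∈ V, IC(y) ≤ IC(x)}. -/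
open Finset MeasureTheory

/-- The squared norm `‖ψ_{t,x}‖² = ∑_{y} ψ_{t,x}(y)²`. -/
noncomputable def waveNormSq {N : ℕ} (lam : Fin N → ℝ) (φ : Fin N → Fin N → ℝ)
    (t : ℝ) (x : Fin N) : ℝ :=
  ∑ y, (hermPsi lam φ t x y) ^ 2

/-- The Maximum (Mean) Diffusion Time `MDT(x) = ∫_0^∞ ‖ψ_{t,x}‖² dt`. -/
noncomputable def MDT {N : ℕ} (lam : Fin N → ℝ) (φ : Fin N → Fin N → ℝ) (x : Fin N) : ℝ :=
  ∫ t in Set.Ioi (0:ℝ), waveNormSq lam φ t x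

/-- Information Centrality
`IC(x) = (∑_{k=1}^{N-1} |φ_k(x)|²/λ_k + (1/N) ∑_y ∑_{k=1}^{N-1} |φ_k(y)|²/λ_k)⁻¹`. -/
noncomputable def infoCentrality {N : ℕ} (lam : Fin N → ℝ) (φ : Fin N → Fin N → ℝ)
    (x : Fin N) : ℝ :=
  (∑ k ∈ Finset.univ.filter (fun k : Fin N => (k : ℕ) ≠ 0), φ k x ^ 2 / lam k
    + (1 / (N : ℝ)) * ∑ y, ∑ k ∈ Finset.univ.filter (fun k : Fin N => (k : ℕ) ≠ 0),
        φ k y ^ 2 / lam k)⁻¹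

/-!
Expanding `ψ_{t,x}` in the orthonormal eigenbasis, Parseval gives
`‖ψ_{t,x}‖² = ∑_{k ≥ 1} (t λ_k e^{-t λ_k} φ_k(x))²`, and `∫_0^∞ t² e^{-2λt} dt = 1/(4λ³)`, so
`MDT(x) = L⁺ₓₓ / 4`, where `L⁺ₓₓ = ∑_{k ≥ 1} φ_k(x)²/λ_k` is the diagonal of the pseudoinverse of
the Laplacian. On the other hand `IC(x) = (L⁺ₓₓ + c)⁻¹` with the constant `c = tr L⁺ / N > 0`.
Both quantities are therefore strictly monotone in `L⁺ₓₓ`, in opposite directions.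
-/

open Real

lemma integrableOn_Ioi_sq_mul_exp_neg_mul {b : ℝ} (hb : 0 < b) :
    IntegrableOn (fun t : ℝ => t ^ 2 * exp (-(b * t))) (Set.Ioi 0) := by
  refine IntegrableOn.congr_fun
    (integrableOn_rpow_mul_exp_neg_mul_rpow (s := 2) (p := 1) (by norm_num) one_pos hb)
    (fun t _ => ?_) measurableSet_Ioi
  simp only [rpow_one, rpow_two, neg_mul]

lemma integral_Ioi_sq_mul_exp_neg_mul {b : ℝ} (hb : 0 < b) :
    ∫ t in Set.Ioi (0 : ℝ), t ^ 2 * exp (-(b * t)) = 2 / b ^ 3 := by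
  have h := integral_rpow_mul_exp_neg_mul_Ioi (a := 3) three_pos hb
  norm_num [Gamma_ofNat_eq_factorial] at h
  rw [h]
  field_simp

lemma sq_mul_mul_exp_neg_mul (l c t : ℝ) :
    (t * l * exp (-(t * l)) * c) ^ 2 = (l * c) ^ 2 * (t ^ 2 * exp (-(2 * l * t))) := by
  rw [show -(2 * l * t) = -(t * l) + -(t * l) by ring, exp_add]
  ring

lemma integrableOn_Ioi_sq_mul_mul_exp_neg_mul {l : ℝ} (hl : 0 < l) (c : ℝ) :
    IntegrableOn (fun t : ℝ => (t * l * exp (-(t * l)) * c) ^ 2) (Set.Ioi 0) := by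
  simp_rw [sq_mul_mul_exp_neg_mul l c]
  exact (integrableOn_Ioi_sq_mul_exp_neg_mul (by positivity)).const_mul _

lemma integral_Ioi_sq_mul_mul_exp_neg_mul {l : ℝ} (hl : 0 < l) (c : ℝ) :
    ∫ t in Set.Ioi (0 : ℝ), (t * l * exp (-(t * l)) * c) ^ 2 = c ^ 2 / (4 * l) := by
  simp_rw [sq_mul_mul_exp_neg_mul l c, integral_const_mul,
    integral_Ioi_sq_mul_exp_neg_mul (by positivity : 0 < 2 * l)]
  field_simp
  ring

lemma sum_sq_sum_mul_of_orthonormal {ι V : Type*} [DecidableEq ι] [Fintype V] {φ : ι → V → ℝ}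
    (horth : ∀ j k, ∑ y, φ j y * φ k y = if j = k then (1 : ℝ) else 0)
    (K : Finset ι) (a : ι → ℝ) :
    ∑ y, (∑ k ∈ K, a k * φ k y) ^ 2 = ∑ k ∈ K, a k ^ 2 := by
  calc ∑ y, (∑ k ∈ K, a k * φ k y) ^ 2
      = ∑ j ∈ K, ∑ k ∈ K, a j * a k * ∑ y, φ j y * φ k y := by
        simp only [sq, sum_mul_sum]
        rw [sum_comm]
        refine sum_congr rfl fun j _ => ?_
        rw [sum_comm]
        refine sum_congr rfl fun k _ => ?_
        rw [mul_sum]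
        exact sum_congr rfl fun y _ => by ring
    _ = ∑ k ∈ K, a k ^ 2 := by simp [horth, sq]

lemma pos_of_monotone_of_pos_one {N : ℕ} (hN : 1 < N) {lam : Fin N → ℝ} (hmono : Monotone lam)
    (hconn : 0 < lam ⟨1, hN⟩) {k : Fin N} (hk : (k : ℕ) ≠ 0) : 0 < lam k :=
  hconn.trans_le (hmono (Fin.le_def.mpr (Nat.one_le_iff_ne_zero.mpr hk)))

noncomputable def pinvDiag {N : ℕ} (lam : Fin N → ℝ) (φ : Fin N → Fin N → ℝ) (x : Fin N) : ℝ :=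
  ∑ k ∈ univ.filter (fun k : Fin N => (k : ℕ) ≠ 0), φ k x ^ 2 / lam k

section Spectral

variable {N : ℕ} {lam : Fin N → ℝ} {φ : Fin N → Fin N → ℝ}

lemma pinvDiag_nonneg (hpos : ∀ k : Fin N, (k : ℕ) ≠ 0 → 0 < lam k) (x : Fin N) :
    0 ≤ pinvDiag lam φ x :=
  sum_nonneg fun k hk => div_nonneg (sq_nonneg _) (hpos k (mem_filter.mp hk).2).le

lemma sum_pinvDiag (horth : ∀ j k, ∑ y, φ j y * φ k y = if j = k then (1 : ℝ) else 0) :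
    ∑ y, pinvDiag lam φ y = ∑ k ∈ univ.filter (fun k : Fin N => (k : ℕ) ≠ 0), (lam k)⁻¹ := by
  unfold pinvDiag
  rw [sum_comm]
  refine sum_congr rfl fun k _ => ?_
  simp only [div_eq_mul_inv, ← sum_mul, sq, horth, if_true, one_mul]

lemma sum_pinvDiag_pos (hN : 1 < N) (hpos : ∀ k : Fin N, (k : ℕ) ≠ 0 → 0 < lam k)
    (horth : ∀ j k, ∑ y, φ j y * φ k y = if j = k then (1 : ℝ) else 0) :
    0 < ∑ y, pinvDiag lam φ y := by
  rw [sum_pinvDiag horth]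
  exact sum_pos (fun k hk => inv_pos.mpr (hpos k (mem_filter.mp hk).2))
    ⟨⟨1, hN⟩, mem_filter.mpr ⟨mem_univ _, one_ne_zero⟩⟩

lemma waveNormSq_eq_sum (horth : ∀ j k, ∑ y, φ j y * φ k y = if j = k then (1 : ℝ) else 0)
    (t : ℝ) (x : Fin N) :
    waveNormSq lam φ t x = ∑ k ∈ univ.filter (fun k : Fin N => (k : ℕ) ≠ 0),
      (t * lam k * exp (-(t * lam k)) * φ k x) ^ 2 :=
  sum_sq_sum_mul_of_orthonormal horth _ _

lemma MDT_eq_pinvDiag_div_four (hpos : ∀ k : Fin N, (k : ℕ) ≠ 0 → 0 < lam k)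
    (horth : ∀ j k, ∑ y, φ j y * φ k y = if j = k then (1 : ℝ) else 0) (x : Fin N) :
    MDT lam φ x = pinvDiag lam φ x / 4 := by
  have hpos' : ∀ k ∈ univ.filter (fun k : Fin N => (k : ℕ) ≠ 0), 0 < lam k :=
    fun k hk => hpos k (mem_filter.mp hk).2
  rw [MDT, setIntegral_congr_fun measurableSet_Ioi fun t _ => waveNormSq_eq_sum horth t x,
    integral_finsetSum _ fun k hk => integrableOn_Ioi_sq_mul_mul_exp_neg_mul (hpos' k hk) _,
    pinvDiag, sum_div]
  refine sum_congr rfl fun k hk => ?_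
  rw [integral_Ioi_sq_mul_mul_exp_neg_mul (hpos' k hk), div_div, mul_comm 4]

lemma infoCentrality_eq_inv_pinvDiag_add (x : Fin N) :
    infoCentrality lam φ x = (pinvDiag lam φ x + 1 / (N : ℝ) * ∑ y, pinvDiag lam φ y)⁻¹ :=
  rfl

end Spectral

lemma forall_le_iff_forall_inv_add_le {α : Type*} {f : α → ℝ} (hf : ∀ x, 0 ≤ f x) {c : ℝ}
    (hc : 0 < c) (x : α) : (∀ y, f x ≤ f y) ↔ ∀ y, (f y + c)⁻¹ ≤ (f x + c)⁻¹ := by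
  refine forall_congr' fun y => ?_
  rw [inv_le_inv₀ (by linarith [hf y]) (by linarith [hf x]), add_le_add_iff_right]

theorem argmin_MDT_eq_argmax_IC
    (N : ℕ) (hN : 1 < N)
    (lam : Fin N → ℝ) (φ : Fin N → Fin N → ℝ)
    (hmono : Monotone lam)
    (horth : ∀ j k, (∑ y, φ j y * φ k y) = if j = k then (1:ℝ) else 0)
    (hconn : 0 < lam ⟨1, hN⟩) :
    {x : Fin N | ∀ y : Fin N, MDT lam φ x ≤ MDT lam φ y}
      = {x : Fin N | ∀ y : Fin N, infoCentrality lam φ y ≤ infoCentrality lam φ x} := by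
  have hpos : ∀ k : Fin N, (k : ℕ) ≠ 0 → 0 < lam k :=
    fun k hk => pos_of_monotone_of_pos_one hN hmono hconn hk
  have hmean : 0 < 1 / (N : ℝ) * ∑ y, pinvDiag lam φ y :=
    mul_pos (by positivity) (sum_pinvDiag_pos hN hpos horth)
  ext x
  simp only [Set.mem_ofPred_eq, MDT_eq_pinvDiag_div_four hpos horth,
    div_le_div_iff_of_pos_right (four_pos : (0 : ℝ) < 4), infoCentrality_eq_inv_pinvDiag_add]
  exact forall_le_iff_forall_inv_add_le (pinvDiag_nonneg hpos) hmean x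
end

section
/- Fix b > 0 and s > 0, and define for nonzero complex z with Re z ≥ 0 the function ζ_s(1/z, b) = (1/s²)( (b s) · log( b s z + (1 + (b s z)²)^{1/2} ) − (1/z² + (b s)²)^{1/2} + 1/z ), using the principal branches of the complex logarithm and square root (so that the first term is b s · arcsinh(b s z)). Then there exist constants C > 0 and c > 0 such that for all nonzero z with Re z ≥ 0, |exp( ζ_s(1/z, b) )| ≤ C e^{c |z|}. -/
/-- The analytic continuation `ζ_s(1/z, b)` of the heat-kernel decay exponent to complex
time arguments `1/z`, using the principal branches of `log` and the complex square root
(`w ^ (1/2 : ℂ)` via `Complex.cpow`), so that the first term is `b s · arcsinh(b s z)`. -/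
noncomputable def zetaInv (b s : ℝ) (z : ℂ) : ℂ :=
  (1 / (s : ℂ) ^ 2) *
    ((b : ℂ) * s * Complex.log ((b : ℂ) * s * z + (1 + ((b : ℂ) * s * z) ^ 2) ^ (1/2 : ℂ))
      - (1 / z ^ 2 + ((b : ℂ) * s) ^ 2) ^ (1/2 : ℂ) + 1 / z)

/-!
With `a = b s`, the real part of `ζ_s(1/z, b)` is
`(a · log ‖a z + √(1 + (a z)²)‖ - Re √(1/z² + a²) + Re (1/z)) / s²`.
For `Re u ≥ 0` the principal root satisfies `Re u ≤ Re √(u² + a²)` (take `u = 1/z`),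
so the last two terms contribute at most `0`, while
`log ‖v + √(1 + v²)‖ ≤ ‖v + √(1 + v²)‖ - 1 ≤ 2 ‖v‖`.
Hence `Re ζ_s(1/z, b) ≤ 2 b² ‖z‖`.
-/

namespace Complex

lemma re_le_re_cpow_inv_two_sq_add {u : ℂ} (hu : 0 ≤ u.re) {r : ℝ} (hr : 0 ≤ r) :
    u.re ≤ ((u ^ 2 + r) ^ (2⁻¹ : ℂ)).re := by
  set w := u ^ 2 + r
  have hw_re : w.re = u.re ^ 2 - u.im ^ 2 + r := by simp [w, sq]
  have hw_im : w.im = 2 * u.re * u.im := by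
    simp only [sq, add_im, mul_im, ofReal_im, add_zero, w]; ring
  have hnorm : ‖w‖ ^ 2 = (2 * u.re ^ 2 - w.re) ^ 2 + 4 * r * u.re ^ 2 := by
    rw [Complex.sq_norm, normSq_apply, hw_im, hw_re]; ring
  rw [cpow_inv_two_re, Real.le_sqrt hu (by linarith [abs_re_le_norm w, neg_abs_le w.re])]
  nlinarith [norm_nonneg w, mul_nonneg hr (sq_nonneg u.re)]

lemma add_cpow_inv_two_one_add_sq_ne_zero (v : ℂ) : v + (1 + v ^ 2) ^ (2⁻¹ : ℂ) ≠ 0 := by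
  intro h
  have := cpow_ofNat_inv_pow (1 + v ^ 2) 2
  rw [eq_neg_of_add_eq_zero_right h] at this
  simp at this

lemma norm_add_cpow_inv_two_one_add_sq_le (v : ℂ) :
    ‖v + (1 + v ^ 2) ^ (2⁻¹ : ℂ)‖ ≤ 1 + 2 * ‖v‖ := by
  have hsqrt : ‖(1 + v ^ 2) ^ (2⁻¹ : ℂ)‖ ≤ 1 + ‖v‖ := by
    rw [← ofReal_ofNat, ← ofReal_inv, norm_cpow_real, ← one_div, ← Real.sqrt_eq_rpow,
      Real.sqrt_le_left (by positivity)]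
    calc ‖1 + v ^ 2‖ ≤ 1 + ‖v‖ ^ 2 := (norm_add_le _ _).trans_eq (by rw [norm_one, norm_pow])
      _ ≤ (1 + ‖v‖) ^ 2 := by nlinarith [norm_nonneg v]
  linarith [norm_add_le v ((1 + v ^ 2) ^ (2⁻¹ : ℂ))]

lemma re_log_add_cpow_inv_two_one_add_sq_le (v : ℂ) :
    (log (v + (1 + v ^ 2) ^ (2⁻¹ : ℂ))).re ≤ 2 * ‖v‖ := by
  rw [log_re]
  have hpos := norm_pos_iff.mpr (add_cpow_inv_two_one_add_sq_ne_zero v)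
  linarith [Real.log_le_sub_one_of_pos hpos, norm_add_cpow_inv_two_one_add_sq_le v]

end Complex

open Complex

lemma re_zetaInv_le {b s : ℝ} (hb : 0 < b) (hs : 0 < s) {z : ℂ} (hz : 0 ≤ z.re) :
    (zetaInv b s z).re ≤ 2 * b ^ 2 * ‖z‖ := by
  set a := b * s
  have ha : 0 < a := mul_pos hb hs
  have hlog := re_log_add_cpow_inv_two_one_add_sq_le (a * z)
  have hinv_re : 0 ≤ (1 / z).re := by
    rw [one_div, inv_re]; exact div_nonneg hz (normSq_nonneg z)
  have hsqrt := re_le_re_cpow_inv_two_sq_add hinv_re (sq_nonneg a)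
  rw [norm_mul, norm_real, Real.norm_of_nonneg ha.le] at hlog
  rw [div_pow, one_pow, ofReal_pow] at hsqrt
  have hzeta : zetaInv b s z = ((s ^ 2)⁻¹ : ℝ) *
      (a * log (a * z + (1 + (a * z) ^ 2) ^ (2⁻¹ : ℂ)) - (1 / z ^ 2 + a ^ 2) ^ (2⁻¹ : ℂ) + 1 / z) := by
    simp only [zetaInv, a, one_div]
    push_cast
    ring
  calc (zetaInv b s z).re
      = (s ^ 2)⁻¹ * (a * (log (a * z + (1 + (a * z) ^ 2) ^ (2⁻¹ : ℂ))).re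
          - ((1 / z ^ 2 + a ^ 2) ^ (2⁻¹ : ℂ)).re + (1 / z).re) := by
        rw [hzeta, re_ofReal_mul, add_re, sub_re, re_ofReal_mul]
    _ ≤ (s ^ 2)⁻¹ * (a * (2 * (a * ‖z‖))) := by
        gcongr; linarith [mul_le_mul_of_nonneg_left hlog ha.le]
    _ = 2 * b ^ 2 * ‖z‖ := by field_simp; ring

theorem exp_zetaInv_exponential_growth_bound (b s : ℝ) (hb : 0 < b) (hs : 0 < s) :
    ∃ C : ℝ, 0 < C ∧ ∃ c : ℝ, 0 < c ∧ ∀ z : ℂ, z ≠ 0 → 0 ≤ z.re →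
      ‖Complex.exp (zetaInv b s z)‖ ≤ C * Real.exp (c * ‖z‖) := by
  refine ⟨1, one_pos, 2 * b ^ 2, by positivity, fun z _ hz => ?_⟩
  rw [norm_exp, one_mul, Real.exp_le_exp]
  exact re_zetaInv_le hb hs hz
end
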